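/- Let μ = (δ_{v₁} + δ_{v₂})/2 with v₁ = diag(i, −i) and v₂ = [[0, i],[i, 0]] in SU(2). Then the smallest closed subgroup of SU(2) containing {v₁, v₂} is the 8-element group G = {±Id, ±v₁, ±v₂, ±v₁v₂}, and for every z ∈ ℂ ∪ {∞}, the orbit of the projective point ê_z (the class of (1,z), with ê_∞ the class of (0,1)) under G is {ê_z, ê_{z⁻¹}, ê_{−z}, ê_{−z⁻¹}} (conventions 0⁻¹ = ∞, ∞⁻¹ = 0, −∞ = ∞); moreover the uniform measure (1/4)(δ_{ê_z} + δ_{ê_{−z}} + δ_{ê_{z⁻¹}} + δ_{ê_{−z⁻¹}}) is invariant for the kernel Π(x̂,S) = ∫ 1_S(v·x̂)‖vx‖² dμ(v). -/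

import Mathlib

open MeasureTheory Filter Topology OnePoint
open scoped ComplexOrder Matrix InnerProductSpace ENNReal
noncomputable section
attribute [local instance] Classical.propDecidable

abbrev Mat2 := Matrix (Fin 2) (Fin 2) ℂ
abbrev Evec2 := EuclideanSpace ℂ (Fin 2)

instance : MeasurableSpace Mat2 :=
  inferInstanceAs (MeasurableSpace (Fin 2 → Fin 2 → ℂ))
instance : MeasurableSpace Evec2 := borel _
instance : BorelSpace Evec2 := ⟨rfl⟩
instance : MeasurableSpace (Projectivization ℂ Evec2) :=
  inferInstanceAs (MeasurableSpace (Quotient (projectivizationSetoid ℂ Evec2)))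

def unitRep (x : Projectivization ℂ Evec2) : Evec2 := (‖x.rep‖⁻¹ : ℂ) • x.rep

def matVec (v : Mat2) (x : Evec2) : Evec2 := Matrix.toEuclideanLin v x

def kerInt (v : Mat2) (x : Projectivization ℂ Evec2) (S : Set (Projectivization ℂ Evec2)) : ℝ :=
  if h : matVec v (unitRep x) = 0 then 0
  else S.indicator (fun _ => ‖matVec v (unitRep x)‖ ^ 2) (Projectivization.mk ℂ _ h)

/-- The transition kernel `Π(x̂, S) = ∫ 1_S(v·x̂) ‖v x‖² dμ(v)`. -/
def PiKer (μ : Measure Mat2) (x : Projectivization ℂ Evec2)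
    (S : Set (Projectivization ℂ Evec2)) : ℝ :=
  ∫ v, kerInt v x S ∂μ

def v1 : Mat2 := !![Complex.I, 0; 0, -Complex.I]
def v2 : Mat2 := !![0, Complex.I; Complex.I, 0]

/-- The 8-element group `G = {±Id, ±v₁, ±v₂, ±v₁v₂}`. -/
def G : Set Mat2 := {1, -1, v1, -v1, v2, -v2, v1 * v2, -(v1 * v2)}

/-- Homogeneous representative of `ê_z`, `z ∈ ℂ ∪ {∞}`: `e_z = (1, z)`, `e_∞ = (0, 1)`. -/
def eP (z : OnePoint ℂ) : Evec2 :=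
  z.elim ((WithLp.equiv 2 (Fin 2 → ℂ)).symm ![0, 1])
    (fun w => (WithLp.equiv 2 (Fin 2 → ℂ)).symm ![1, w])

lemma eP_ne (z : OnePoint ℂ) : eP z ≠ 0 := by
  induction z using OnePoint.rec with
  | infty =>
    intro h
    have := congrFun (congrArg (WithLp.equiv 2 (Fin 2 → ℂ)) h) 1
    simp [eP] at this
  | coe w =>
    intro h
    have := congrFun (congrArg (WithLp.equiv 2 (Fin 2 → ℂ)) h) 0
    simp [eP] at this

/-- The projective point `ê_z`. -/
def pz (z : OnePoint ℂ) : Projectivization ℂ Evec2 := Projectivization.mk ℂ (eP z) (eP_ne z)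

/-- Inversion `z ↦ z⁻¹` on `ℂ ∪ {∞}`, with `0⁻¹ = ∞` and `∞⁻¹ = 0`. -/
def pinv (z : OnePoint ℂ) : OnePoint ℂ :=
  z.elim ((0 : ℂ) : OnePoint ℂ) (fun w => if w = 0 then ∞ else ((w⁻¹ : ℂ) : OnePoint ℂ))

/-- Negation `z ↦ -z` on `ℂ ∪ {∞}`, with `-∞ = ∞`. -/
def pneg (z : OnePoint ℂ) : OnePoint ℂ := z.elim ∞ (fun w => ((-w : ℂ) : OnePoint ℂ))

/-- The measure `μ = (δ_{v₁} + δ_{v₂})/2`. -/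
def muEx : Measure Mat2 := (2 : ℝ≥0∞)⁻¹ • (Measure.dirac v1 + Measure.dirac v2)

/-- The uniform measure on the orbit of `ê_z`. -/
def nuEx (z : OnePoint ℂ) : Measure (Projectivization ℂ Evec2) :=
  (4 : ℝ≥0∞)⁻¹ • (Measure.dirac (pz z) + Measure.dirac (pz (pneg z))
    + Measure.dirac (pz (pinv z)) + Measure.dirac (pz (pneg (pinv z))))

/-! Since `v₁² = v₂² = -1` and `v₂ v₁ = -v₁ v₂`, the monoid generated by `v₁, v₂` is the
finite set `G`; hence it is closed and, the generators being anti-Hermitian, stable under `ᴴ`.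
In the affine coordinate of `P(ℂ²)`, `v₁` acts as `z ↦ -z` and `v₂` as `z ↦ z⁻¹`, two commuting
involutions, so the orbit of `ê_z` is `{ê_z, ê_{-z}, ê_{z⁻¹}, ê_{-z⁻¹}}`. As `v₁, v₂` are
unitary, `Π(ê_ζ, ·) = (δ_{ê_{-ζ}} + δ_{ê_{ζ⁻¹}})/2`, and this kernel maps the uniform measure
on the orbit to itself. -/

lemma v1_mul_self : v1 * v1 = -1 := by
  ext i j; fin_cases i <;> fin_cases j <;> simp [v1]

lemma v2_mul_self : v2 * v2 = -1 := by
  ext i j; fin_cases i <;> fin_cases j <;> simp [v2]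

lemma v2_mul_v1 : v2 * v1 = -(v1 * v2) := by
  ext i j; fin_cases i <;> fin_cases j <;> simp [v1, v2]

lemma v1_mul_v2_mul_v2 : v1 * v2 * v2 = -v1 := by
  rw [mul_assoc, v2_mul_self, mul_neg_one]

lemma conjTranspose_v1 : v1ᴴ = -v1 := by
  ext i j; fin_cases i <;> fin_cases j <;> simp [v1]

lemma conjTranspose_v2 : v2ᴴ = -v2 := by
  ext i j; fin_cases i <;> fin_cases j <;> simp [v2]

lemma one_mem_G : (1 : Mat2) ∈ G := by simp [G]
lemma v1_mem_G : v1 ∈ G := by simp [G]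
lemma v2_mem_G : v2 ∈ G := by simp [G]
lemma v1_mul_v2_mem_G : v1 * v2 ∈ G := by simp [G]

lemma G_subset_of_mul_mem {H : Set Mat2} (hv1 : v1 ∈ H) (hv2 : v2 ∈ H) (hone : (1 : Mat2) ∈ H)
    (hmul : ∀ a ∈ H, ∀ b ∈ H, a * b ∈ H) : G ⊆ H := by
  have hneg : ∀ a ∈ H, -a ∈ H := fun a ha => by
    simpa [v1_mul_self] using hmul _ (hmul _ hv1 _ hv1) _ ha
  have hv12 := hmul _ hv1 _ hv2
  rintro g (rfl | rfl | rfl | rfl | rfl | rfl | rfl | rfl) <;>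
    first | assumption | (apply hneg; assumption)

-- `{a | a G ⊆ G}` is closed under products, so it suffices to check the generators.
lemma mul_mem_G : ∀ a ∈ G, ∀ b ∈ G, a * b ∈ G := by
  suffices G ⊆ {a | ∀ b ∈ G, a * b ∈ G} from this
  refine G_subset_of_mul_mem ?_ ?_ (by simp)
    fun a ha b hb c hc => mul_assoc a b c ▸ ha _ (hb c hc)
  all_goals
    rintro b (rfl | rfl | rfl | rfl | rfl | rfl | rfl | rfl) <;>
      simp [G, ← mul_assoc, v1_mul_self, v2_mul_self, v2_mul_v1, v1_mul_v2_mul_v2]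

lemma conjTranspose_mem_G : ∀ a ∈ G, aᴴ ∈ G := by
  suffices G ⊆ {a | aᴴ ∈ G} from this
  refine G_subset_of_mul_mem ?_ ?_ (by simp [one_mem_G]) fun a ha b hb => ?_
  · simp [conjTranspose_v1, G]
  · simp [conjTranspose_v2, G]
  · simpa [Matrix.conjTranspose_mul] using mul_mem_G _ hb _ ha

lemma v1_mem_specialUnitaryGroup : v1 ∈ Matrix.specialUnitaryGroup (Fin 2) ℂ := by
  refine Matrix.mem_specialUnitaryGroup_iff.2 ⟨Matrix.mem_unitaryGroup_iff'.2 ?_, ?_⟩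
  · rw [Matrix.star_eq_conjTranspose, conjTranspose_v1, neg_mul, v1_mul_self, neg_neg]
  · simp [Matrix.det_fin_two, v1]

lemma v2_mem_specialUnitaryGroup : v2 ∈ Matrix.specialUnitaryGroup (Fin 2) ℂ := by
  refine Matrix.mem_specialUnitaryGroup_iff.2 ⟨Matrix.mem_unitaryGroup_iff'.2 ?_, ?_⟩
  · rw [Matrix.star_eq_conjTranspose, conjTranspose_v2, neg_mul, v2_mul_self, neg_neg]
  · simp [Matrix.det_fin_two, v2]

lemma G_subset_specialUnitaryGroup : G ⊆ Matrix.specialUnitaryGroup (Fin 2) ℂ :=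
  G_subset_of_mul_mem v1_mem_specialUnitaryGroup v2_mem_specialUnitaryGroup (Submonoid.one_mem _)
    fun _ ha _ hb => Submonoid.mul_mem _ ha hb

lemma isClosed_G : IsClosed G := by
  have hfin : G.Finite := by simp [G]
  exact hfin.isClosed

lemma matVec_mul (a b : Mat2) (u : Evec2) : matVec (a * b) u = matVec a (matVec b u) := by
  simp [matVec, Matrix.toEuclideanLin]

lemma matVec_neg (g : Mat2) (u : Evec2) : matVec (-g) u = -matVec g u := by
  simp [matVec]

lemma matVec_smul (g : Mat2) (c : ℂ) (u : Evec2) : matVec g (c • u) = c • matVec g u :=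
  _root_.map_smul _ c u

lemma norm_matVec_of_mem_unitaryGroup {g : Mat2} (hg : g ∈ Matrix.unitaryGroup (Fin 2) ℂ)
    (u : Evec2) : ‖matVec g u‖ = ‖u‖ := by
  have hU : Matrix.toEuclideanCLM (n := Fin 2) (𝕜 := ℂ) g ∈ unitary (Evec2 →L[ℂ] Evec2) :=
    Unitary.map_mem _ hg
  exact ContinuousLinearMap.norm_map_of_mem_unitary hU u

lemma eP_coe (w : ℂ) : eP w = WithLp.toLp 2 ![1, w] := rfl
lemma eP_infty : eP ∞ = WithLp.toLp 2 ![0, 1] := rfl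

lemma pneg_infty : pneg ∞ = (∞ : OnePoint ℂ) := rfl
lemma pneg_coe (w : ℂ) : pneg w = ((-w : ℂ) : OnePoint ℂ) := rfl
lemma pinv_infty : pinv ∞ = ((0 : ℂ) : OnePoint ℂ) := rfl
lemma pinv_coe_zero : pinv ((0 : ℂ) : OnePoint ℂ) = (∞ : OnePoint ℂ) := by simp [pinv]
lemma pinv_coe {w : ℂ} (hw : w ≠ 0) : pinv w = ((w⁻¹ : ℂ) : OnePoint ℂ) := by
  simp [pinv, hw]

lemma pneg_pneg (z : OnePoint ℂ) : pneg (pneg z) = z := by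
  induction z using OnePoint.rec <;> simp [pneg]

lemma pinv_pinv (z : OnePoint ℂ) : pinv (pinv z) = z := by
  induction z using OnePoint.rec with
  | infty => simp [pinv]
  | coe w => by_cases hw : w = 0 <;> simp [pinv, hw]

lemma pinv_pneg (z : OnePoint ℂ) : pinv (pneg z) = pneg (pinv z) := by
  induction z using OnePoint.rec with
  | infty => simp [pinv, pneg]
  | coe w => by_cases hw : w = 0 <;> simp [pinv, pneg, hw]

/-- `g` sends each point `ê_z` of `P(ℂ²)` to `ê_{f z}`. -/
def ActsBy (g : Mat2) (f : OnePoint ℂ → OnePoint ℂ) : Prop :=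
  ∀ z, ∃ c : ℂ, c ≠ 0 ∧ matVec g (eP z) = c • eP (f z)

namespace ActsBy

variable {a b g : Mat2} {f h : OnePoint ℂ → OnePoint ℂ}

lemma mul (ha : ActsBy a f) (hb : ActsBy b h) : ActsBy (a * b) (f ∘ h) := fun z => by
  obtain ⟨c, hc, hbz⟩ := hb z
  obtain ⟨d, hd, hahz⟩ := ha (h z)
  exact ⟨c * d, mul_ne_zero hc hd, by
    rw [matVec_mul, hbz, matVec_smul, hahz, smul_smul, Function.comp_apply]⟩

lemma neg (hg : ActsBy g f) : ActsBy (-g) f := fun z => by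
  obtain ⟨c, hc, hgz⟩ := hg z
  exact ⟨-c, neg_ne_zero.2 hc, by rw [matVec_neg, hgz, neg_smul]⟩

lemma matVec_ne_zero (hg : ActsBy g f) (z : OnePoint ℂ) : matVec g (eP z) ≠ 0 := by
  obtain ⟨c, hc, hgz⟩ := hg z
  rw [hgz]
  exact smul_ne_zero hc (eP_ne _)

lemma mk_matVec (hg : ActsBy g f) {z : OnePoint ℂ} {u : Evec2} (hu : u ≠ 0)
    (huz : Projectivization.mk ℂ u hu = pz z) (hgu : matVec g u ≠ 0) :
    Projectivization.mk ℂ (matVec g u) hgu = pz (f z) := by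
  obtain ⟨a, rfl⟩ := (Projectivization.mk_eq_mk_iff' ℂ _ _ hu (eP_ne z)).1 huz
  obtain ⟨c, -, hgz⟩ := hg z
  refine (Projectivization.mk_eq_mk_iff' ℂ _ _ hgu (eP_ne _)).2 ⟨a * c, ?_⟩
  rw [matVec_smul, hgz, smul_smul]

end ActsBy

lemma actsBy_one : ActsBy 1 id := fun z => ⟨1, one_ne_zero, by simp [matVec]⟩

lemma actsBy_v1 : ActsBy v1 pneg := by
  intro z
  induction z using OnePoint.rec with
  | infty =>
    refine ⟨-Complex.I, by simp, ?_⟩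
    ext i; fin_cases i <;> simp [eP_infty, pneg_infty, matVec, v1]
  | coe w =>
    refine ⟨Complex.I, by simp, ?_⟩
    ext i; fin_cases i <;> simp [eP_coe, pneg_coe, matVec, v1, mul_comm]

lemma actsBy_v2 : ActsBy v2 pinv := by
  intro z
  induction z using OnePoint.rec with
  | infty =>
    refine ⟨Complex.I, by simp, ?_⟩
    ext i; fin_cases i <;> simp [eP_infty, pinv_infty, eP_coe, matVec, v2]
  | coe w =>
    by_cases hw : w = 0
    · subst hw
      refine ⟨Complex.I, by simp, ?_⟩
      ext i; fin_cases i <;> simp [eP_coe, eP_infty, pinv_coe_zero, matVec, v2]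
    · refine ⟨Complex.I * w, by simp [hw], ?_⟩
      ext i; fin_cases i <;> simp [eP_coe, pinv_coe hw, matVec, v2, mul_comm]
      field_simp

lemma orbit_eq (z : OnePoint ℂ) :
    {y : Projectivization ℂ Evec2 | ∃ g ∈ G, ∃ h : matVec g (eP z) ≠ 0,
        y = Projectivization.mk ℂ _ h}
      = {pz z, pz (pinv z), pz (pneg z), pz (pneg (pinv z))} := by
  have hv12 : ActsBy (v1 * v2) (pneg ∘ pinv) := actsBy_v1.mul actsBy_v2
  have mk_eq {g f} (hg : ActsBy g f) (h : matVec g (eP z) ≠ 0) :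
      Projectivization.mk ℂ _ h = pz (f z) := hg.mk_matVec (eP_ne z) rfl h
  ext y
  simp only [Set.mem_ofPred_eq, Set.mem_insert_iff, Set.mem_singleton_iff]
  constructor
  · rintro ⟨g, hg, h, rfl⟩
    rcases hg with rfl | rfl | rfl | rfl | rfl | rfl | rfl | rfl
    · exact .inl (mk_eq actsBy_one h)
    · exact .inl (mk_eq actsBy_one.neg h)
    · exact .inr <| .inr <| .inl (mk_eq actsBy_v1 h)
    · exact .inr <| .inr <| .inl (mk_eq actsBy_v1.neg h)
    · exact .inr <| .inl (mk_eq actsBy_v2 h)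
    · exact .inr <| .inl (mk_eq actsBy_v2.neg h)
    · exact .inr <| .inr <| .inr (mk_eq hv12 h)
    · exact .inr <| .inr <| .inr (mk_eq hv12.neg h)
  · rintro (rfl | rfl | rfl | rfl)
    · exact ⟨1, one_mem_G, actsBy_one.matVec_ne_zero z, (mk_eq actsBy_one _).symm⟩
    · exact ⟨v2, v2_mem_G, actsBy_v2.matVec_ne_zero z, (mk_eq actsBy_v2 _).symm⟩
    · exact ⟨v1, v1_mem_G, actsBy_v1.matVec_ne_zero z, (mk_eq actsBy_v1 _).symm⟩
    · exact ⟨v1 * v2, v1_mul_v2_mem_G, hv12.matVec_ne_zero z, (mk_eq hv12 _).symm⟩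

instance : MeasurableSingletonClass Mat2 :=
  inferInstanceAs (MeasurableSingletonClass (Fin 2 → Fin 2 → ℂ))

-- The fibre of the quotient map over `x` is the punctured line `ℂ ∙ x.rep`, a closed set.
instance : MeasurableSingletonClass (Projectivization ℂ Evec2) where
  measurableSet_singleton x := by
    have hfibre : (Quotient.mk'' ⁻¹' {x} : Set {v : Evec2 // v ≠ 0})
        = Subtype.val ⁻¹' (ℂ ∙ x.rep : Set Evec2) := by
      ext ⟨v, hv⟩
      change Projectivization.mk ℂ v hv = x ↔ v ∈ ℂ ∙ x.rep
      conv_lhs => rw [← x.mk_rep]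
      rw [Projectivization.mk_eq_mk_iff', Submodule.mem_span_singleton]
    change MeasurableSet (Quotient.mk'' ⁻¹' {x})
    rw [hfibre]
    exact (ℂ ∙ x.rep).closed_of_finiteDimensional.measurableSet.preimage measurable_subtype_coe

lemma unitRep_ne_zero (x : Projectivization ℂ Evec2) : unitRep x ≠ 0 :=
  smul_ne_zero (by simpa using x.rep_nonzero) x.rep_nonzero

lemma mk_unitRep (x : Projectivization ℂ Evec2) :
    Projectivization.mk ℂ (unitRep x) (unitRep_ne_zero x) = x := by
  conv_rhs => rw [← x.mk_rep]
  exact (Projectivization.mk_eq_mk_iff' ℂ _ _ _ x.rep_nonzero).2 ⟨_, rfl⟩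

lemma norm_unitRep (x : Projectivization ℂ Evec2) : ‖unitRep x‖ = 1 := by
  rw [unitRep, norm_smul, norm_inv, Complex.norm_real, norm_norm,
    inv_mul_cancel₀ (norm_ne_zero_iff.2 x.rep_nonzero)]

lemma kerInt_pz {g : Mat2} {f : OnePoint ℂ → OnePoint ℂ}
    (hU : g ∈ Matrix.unitaryGroup (Fin 2) ℂ) (hg : ActsBy g f) (z : OnePoint ℂ)
    (S : Set (Projectivization ℂ Evec2)) : kerInt g (pz z) S = S.indicator 1 (pz (f z)) := by
  have hne : matVec g (unitRep (pz z)) ≠ 0 := by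
    rw [← norm_ne_zero_iff, norm_matVec_of_mem_unitaryGroup hU, norm_unitRep]
    exact one_ne_zero
  rw [kerInt, dif_neg hne, hg.mk_matVec (unitRep_ne_zero _) (mk_unitRep _) hne,
    norm_matVec_of_mem_unitaryGroup hU, norm_unitRep, one_pow]
  rfl

lemma PiKer_muEx_pz (z : OnePoint ℂ) (S : Set (Projectivization ℂ Evec2)) :
    PiKer muEx (pz z) S = (S.indicator 1 (pz (pneg z)) + S.indicator 1 (pz (pinv z))) / 2 := by
  rw [PiKer, muEx, integral_smul_measure, integral_add_measure (integrable_dirac (by simp))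
      (integrable_dirac (by simp)), integral_dirac, integral_dirac,
    kerInt_pz (Matrix.specialUnitaryGroup_le_unitaryGroup v1_mem_specialUnitaryGroup) actsBy_v1,
    kerInt_pz (Matrix.specialUnitaryGroup_le_unitaryGroup v2_mem_specialUnitaryGroup) actsBy_v2]
  simp [ENNReal.toReal_inv]
  ring

lemma integral_nuEx (z : OnePoint ℂ) (f : Projectivization ℂ Evec2 → ℝ) :
    ∫ x, f x ∂nuEx z =
      (f (pz z) + f (pz (pneg z)) + f (pz (pinv z)) + f (pz (pneg (pinv z)))) / 4 := by
  have hint (a : Projectivization ℂ Evec2) : Integrable f (Measure.dirac a) :=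
    integrable_dirac (by simp)
  rw [nuEx, integral_smul_measure,
    integral_add_measure (((hint _).add_measure (hint _)).add_measure (hint _)) (hint _),
    integral_add_measure ((hint _).add_measure (hint _)) (hint _),
    integral_add_measure (hint _) (hint _),
    integral_dirac, integral_dirac, integral_dirac, integral_dirac]
  simp [ENNReal.toReal_inv]
  ring

-- Each of the four orbit points is reached from exactly two others, each with probability `1/2`.
lemma integral_PiKer_nuEx (z : OnePoint ℂ) {S : Set (Projectivization ℂ Evec2)}
    (hS : MeasurableSet S) : ∫ x, PiKer muEx x S ∂nuEx z = (nuEx z S).toReal := by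
  rw [← measureReal_def, ← integral_indicator_one hS, integral_nuEx, integral_nuEx]
  simp only [PiKer_muEx_pz, pneg_pneg, pinv_pinv, pinv_pneg]
  ring

/-- For `μ = (δ_{v₁}+δ_{v₂})/2` with `v₁ = diag(i,-i)`, `v₂ = [[0,i],[i,0]]`: `G` is the
smallest closed subgroup of `SU(2)` containing `v₁, v₂`; the `G`-orbit of `ê_z` is
`{ê_z, ê_{z⁻¹}, ê_{-z}, ê_{-z⁻¹}}`; and the uniform measure on this orbit is invariant for
the kernel `Π`. -/
theorem stmt19 :
    -- G consists of special unitary matrices and contains v₁, v₂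
    (∀ g ∈ G, gᴴ * g = 1 ∧ g.det = 1) ∧ v1 ∈ G ∧ v2 ∈ G ∧
    -- G is a closed subgroup (in SU(2), the inverse is the conjugate transpose)
    (1 : Mat2) ∈ G ∧ (∀ a ∈ G, ∀ b ∈ G, a * b ∈ G) ∧ (∀ a ∈ G, aᴴ ∈ G) ∧ IsClosed G ∧
    -- minimality: any closed subgroup containing v₁, v₂ contains G
    (∀ H : Set Mat2, v1 ∈ H → v2 ∈ H → (1 : Mat2) ∈ H →
      (∀ a ∈ H, ∀ b ∈ H, a * b ∈ H) → (∀ a ∈ H, aᴴ ∈ H) → IsClosed H → G ⊆ H) ∧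
    -- the orbit of ê_z under G
    (∀ z : OnePoint ℂ,
      {y : Projectivization ℂ Evec2 | ∃ g ∈ G, ∃ h : matVec g (eP z) ≠ 0,
          y = Projectivization.mk ℂ _ h}
        = {pz z, pz (pinv z), pz (pneg z), pz (pneg (pinv z))}) ∧
    -- invariance of the uniform measure on the orbit
    (∀ z : OnePoint ℂ, ∀ S : Set (Projectivization ℂ Evec2), MeasurableSet S →
      ∫ x, PiKer muEx x S ∂(nuEx z) = (nuEx z S).toReal) := by
  refine ⟨fun g hg => ?_, v1_mem_G, v2_mem_G, one_mem_G, mul_mem_G, conjTranspose_mem_G,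
    isClosed_G, fun H hv1 hv2 hone hmul _ _ => G_subset_of_mul_mem hv1 hv2 hone hmul, orbit_eq,
    fun z _ hS => integral_PiKer_nuEx z hS⟩
  obtain ⟨hU, hdet⟩ := Matrix.mem_specialUnitaryGroup_iff.1 (G_subset_specialUnitaryGroup hg)
  exact ⟨Matrix.mem_unitaryGroup_iff'.1 hU, hdet⟩
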